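/- arXiv:1406.5338 — 4 statements merged into one kernel-verified Lean document; each statement's English description precedes it below -/
import Mathlib

section
/- With Ai ∈ ℂ^{ni×ni}, Bi, Ci matrices of compatible sizes and zi not in the spectrum of Ai (i = 1, 2, 3), the product C1(z1 I - A1)⁻¹ B1 · C2(z2 I - A2)⁻¹ B2 · C3(z3 I - A3)⁻¹ B3 equals C(Λ(z) - A)⁻¹ B, where Λ(z) = diag(z1 I_{n1}, z2 I_{n2}, z3 I_{n3}), A is the block upper-triangular matrix with diagonal blocks A1, A2, A3, superdiagonal blocks B1 C2 and B2 C3, and zero (1,3) block; B = (0, 0, B3)ᵀ and C = (C1, 0, 0). -/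
/-!
Eliminating in the block upper triangular resolvent gives the cascade identity
`(C, 0) (M, -XY; 0, N)⁻¹ (0, B)ᵀ = (C M⁻¹ X) (Y N⁻¹ B)`: only the `(1,2)` block
`M⁻¹ X Y N⁻¹` of the inverse survives between `(C, 0)` and `(0, B)ᵀ`.
The realization of the triple product is this identity used twice, first for the
splitting `n₁ | n₂ ⊕ n₃` of the state space and then for `n₂ | n₃`, with `X = B₁` and
`Y = (C₂, 0)` in the first step.
-/

open Matrix

namespace Matrix

variable {l m n o : Type*} {α : Type*}

theorem fromBlocks_sub [Sub α] (A : Matrix n l α) (B : Matrix n m α) (C : Matrix o l α)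
    (D : Matrix o m α) (A' : Matrix n l α) (B' : Matrix n m α) (C' : Matrix o l α)
    (D' : Matrix o m α) :
    fromBlocks A B C D - fromBlocks A' B' C' D' = fromBlocks (A - A') (B - B') (C - C') (D - D') := by
  ext (i | i) (j | j) <;> rfl

theorem fromCols_zero_mul_inv_fromBlocks_zero₂₁_mul_fromRows_zero
    {p q r : Type*} [Fintype m] [Fintype n] [DecidableEq m] [DecidableEq n] [Fintype r]
    [CommRing α] {M : Matrix m m α} {N : Matrix n n α} (hM : IsUnit M) (hN : IsUnit N)
    (C : Matrix p m α) (X : Matrix m r α) (Y : Matrix r n α) (B : Matrix n q α) :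
    fromCols C (0 : Matrix p n α) * (fromBlocks M (-(X * Y)) 0 N)⁻¹ * fromRows (0 : Matrix m q α) B =
      C * M⁻¹ * X * (Y * N⁻¹ * B) := by
  rw [inv_fromBlocks_zero₂₁_of_isUnit_iff _ _ _ (iff_of_true hM hN), fromCols_mul_fromBlocks,
    fromCols_mul_fromRows]
  simp [Matrix.mul_assoc]

end Matrix

/-- Realization of the product of three rational matrix functions vanishing at infinity,
each of a different variable:
`C₁(z₁I-A₁)⁻¹B₁ ⬝ C₂(z₂I-A₂)⁻¹B₂ ⬝ C₃(z₃I-A₃)⁻¹B₃ = C (Λ(z) - A)⁻¹ B` where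
`Λ(z) = diag(z₁I, z₂I, z₃I)`, `A` is block upper triangular with diagonal `A₁, A₂, A₃`,
superdiagonal `B₁C₂, B₂C₃`, zero `(1,3)` block, `B = (0,0,B₃)ᵀ` and `C = (C₁,0,0)`. -/
theorem product_realization_three_variables_vanishing_at_infinity
    (n1 n2 n3 p q1 q2 q3 : ℕ)
    (A1 : Matrix (Fin n1) (Fin n1) ℂ) (B1 : Matrix (Fin n1) (Fin q1) ℂ)
    (C1 : Matrix (Fin p) (Fin n1) ℂ)
    (A2 : Matrix (Fin n2) (Fin n2) ℂ) (B2 : Matrix (Fin n2) (Fin q2) ℂ)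
    (C2 : Matrix (Fin q1) (Fin n2) ℂ)
    (A3 : Matrix (Fin n3) (Fin n3) ℂ) (B3 : Matrix (Fin n3) (Fin q3) ℂ)
    (C3 : Matrix (Fin q2) (Fin n3) ℂ)
    (z1 z2 z3 : ℂ)
    (h1 : IsUnit (z1 • (1 : Matrix (Fin n1) (Fin n1) ℂ) - A1))
    (h2 : IsUnit (z2 • (1 : Matrix (Fin n2) (Fin n2) ℂ) - A2))
    (h3 : IsUnit (z3 • (1 : Matrix (Fin n3) (Fin n3) ℂ) - A3)) :
    C1 * (z1 • (1 : Matrix (Fin n1) (Fin n1) ℂ) - A1)⁻¹ * B1 *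
        (C2 * (z2 • (1 : Matrix (Fin n2) (Fin n2) ℂ) - A2)⁻¹ * B2) *
        (C3 * (z3 • (1 : Matrix (Fin n3) (Fin n3) ℂ) - A3)⁻¹ * B3) =
      fromCols C1 (0 : Matrix (Fin p) (Fin n2 ⊕ Fin n3) ℂ) *
        (fromBlocks (z1 • (1 : Matrix (Fin n1) (Fin n1) ℂ)) 0 0
            (fromBlocks (z2 • (1 : Matrix (Fin n2) (Fin n2) ℂ)) 0 0
              (z3 • (1 : Matrix (Fin n3) (Fin n3) ℂ))) -
          fromBlocks A1 (fromCols (B1 * C2) (0 : Matrix (Fin n1) (Fin n3) ℂ)) 0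
            (fromBlocks A2 (B2 * C3) 0 A3))⁻¹ *
        fromRows (0 : Matrix (Fin n1) (Fin q3) ℂ) (fromRows (0 : Matrix (Fin n2) (Fin q3) ℂ) B3) := by
  have hcoupling : fromCols (B1 * C2) (0 : Matrix (Fin n1) (Fin n3) ℂ) =
      B1 * fromCols C2 (0 : Matrix (Fin q1) (Fin n3) ℂ) := by
    rw [mul_fromCols, Matrix.mul_zero]
  rw [fromBlocks_sub, fromBlocks_sub, hcoupling]
  simp only [zero_sub, sub_zero]
  rw [fromCols_zero_mul_inv_fromBlocks_zero₂₁_mul_fromRows_zero h1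
      (isUnit_fromBlocks_zero₂₁.mpr ⟨h2, h3⟩),
    fromCols_zero_mul_inv_fromBlocks_zero₂₁_mul_fromRows_zero h2 h3, Matrix.mul_assoc]
end

section
/- Let M(z) = D + C(zI - A)⁻¹ B be a scalar- or matrix-valued rational function with ρ(A) < 1, and Markov parameters h₀ = D, h_k = C A^{k-1} B for k ≥ 1, and h_k = 0 for k < 0. Define c_n = ∑_{j∈ℤ} h_j* h_{j+n}, Γ = ∑_{u=0}^∞ A*^u C* C A^u, and Y = D* C + B* Γ A. Then c₀ = D* D + B* Γ B, c_n = Y A^{n-1} B for n > 0, and c_n = B* A*^{(-n-1)} Y* for n < 0. -/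
/-! Only `j ≥ 0` contributes to `c_n = ∑ⱼ h_j* h_{j+n}` when `n ≥ 0`. The `j = 0` term is
`D* h_n`, and for `j = u + 1` the term `(C A^u B)* C A^{u+n} B` factors as
`B* (A*^u C* C A^u) A^n B`, so summing over `u` gives `B* Γ A^n B`; with `h_{n+1} = C A^n B`
this is `Y A^n B`. Reindexing `j ↦ j + n` shows `c_{-n} = c_n*`. Gelfand's formula turns
`ρ(A) < 1` into a geometric bound `‖A^u‖ ≤ r^u` with `r < 1`, which makes `Γ` converge. -/

open Matrix Filter
open scoped ENNReal Matrix.Norms.L2Operator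

theorem exists_norm_pow_le_geometric_of_spectralRadius_lt_one {E : Type*} [NormedRing E]
    [NormedAlgebra ℂ E] [CompleteSpace E] {a : E} (ha : spectralRadius ℂ a < 1) :
    ∃ r : ℝ, 0 ≤ r ∧ r < 1 ∧ ∀ᶠ n : ℕ in atTop, ‖a ^ n‖ ≤ r ^ n := by
  obtain ⟨r, hρr, hr1⟩ := ENNReal.lt_iff_exists_nnreal_btwn.mp ha
  refine ⟨r, r.coe_nonneg, by exact_mod_cast hr1, ?_⟩
  filter_upwards
    [(spectrum.pow_norm_pow_one_div_tendsto_nhds_spectralRadius a).eventually_lt_const hρr,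
    eventually_ge_atTop 1] with n hn hn1
  have hroot : ‖a ^ n‖ ^ (1 / n : ℝ) < r :=
    (ENNReal.ofReal_lt_iff_lt_toReal (by positivity) ENNReal.coe_ne_top).mp hn
  have hn0 : (n : ℝ) ≠ 0 := by positivity
  calc ‖a ^ n‖ = (‖a ^ n‖ ^ (1 / n : ℝ)) ^ n := by
        rw [← Real.rpow_natCast, ← Real.rpow_mul (norm_nonneg _), one_div_mul_cancel hn0,
          Real.rpow_one]
    _ ≤ r ^ n := by gcongr

theorem summable_star_pow_mul_mul_pow_of_spectralRadius_lt_one {E : Type*} [NormedRing E]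
    [StarRing E] [NormedStarGroup E] [NormedAlgebra ℂ E] [CompleteSpace E] {a : E}
    (ha : spectralRadius ℂ a < 1) (x : E) :
    Summable fun n : ℕ => star (a ^ n) * x * a ^ n := by
  obtain ⟨r, hr0, hr1, hbound⟩ := exists_norm_pow_le_geometric_of_spectralRadius_lt_one ha
  refine .of_norm_bounded_eventually_nat
    ((summable_geometric_of_lt_one (r := r * r) (by positivity) (by nlinarith)).mul_left ‖x‖) ?_
  filter_upwards [hbound] with n hn
  calc ‖star (a ^ n) * x * a ^ n‖ ≤ ‖a ^ n‖ * ‖x‖ * ‖a ^ n‖ := by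
        grw [norm_mul_le, norm_mul_le, norm_star]
    _ ≤ r ^ n * ‖x‖ * r ^ n := by gcongr
    _ = ‖x‖ * (r * r) ^ n := by ring

section Correlation

variable {R : Type*} [CommSemiring R] [StarRing R] [TopologicalSpace R] {l m n : Type*}

theorem hasSum_conjTranspose_mul_mul [IsTopologicalSemiring R] [Fintype l] {ι : Type*}
    {f : ι → Matrix l l R} {Γ : Matrix l l R} (hf : HasSum f Γ) (B : Matrix l m R)
    (W : Matrix l n R) : HasSum (fun i => Bᴴ * f i * W) (Bᴴ * Γ * W) :=
  hf.map ((addMonoidHomMulRight W).comp (addMonoidHomMulLeft Bᴴ))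
    ((continuous_const.matrix_mul continuous_id).matrix_mul continuous_const)

noncomputable def autocorrelation [Fintype m] (h : ℤ → Matrix m n R) (j : ℤ) : Matrix n n R :=
  ∑' i, (h i)ᴴ * h (i + j)

theorem autocorrelation_neg [Fintype m] [ContinuousStar R] [T2Space R] (h : ℤ → Matrix m n R)
    (j : ℤ) : autocorrelation h (-j) = (autocorrelation h j)ᴴ := by
  rw [autocorrelation, autocorrelation, conjTranspose_tsum, ← (Equiv.addRight j).tsum_eq]
  simp [conjTranspose_mul]

theorem hasSum_autocorrelation_of_markov [IsTopologicalSemiring R] [Fintype l] [Fintype m]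
    [DecidableEq l] {h : ℤ → Matrix m n R} {A : Matrix l l R}
    {B : Matrix l n R} {C : Matrix m l R} {Γ : Matrix l l R}
    (hpos : ∀ i : ℕ, h (i + 1) = C * A ^ i * B) (hneg : ∀ i : ℤ, i < 0 → h i = 0)
    (hΓ : HasSum (fun u : ℕ => (Aᴴ) ^ u * Cᴴ * C * A ^ u) Γ) (j : ℕ) :
    HasSum (fun i : ℤ => (h i)ᴴ * h (i + j)) ((h 0)ᴴ * h j + Bᴴ * Γ * (A ^ j * B)) := by
  have hsucc : ∀ u : ℕ, (h ↑(u + 1))ᴴ * h (↑(u + 1) + j) =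
      Bᴴ * ((Aᴴ) ^ u * Cᴴ * C * A ^ u) * (A ^ j * B) := by
    intro u
    have hshift : ((u + 1 : ℕ) : ℤ) + j = ((u + j : ℕ) : ℤ) + 1 := by push_cast; ring
    rw [hshift, Nat.cast_succ, hpos, hpos]
    simp only [conjTranspose_mul, conjTranspose_pow, pow_add, Matrix.mul_assoc]
  have hnat : HasSum (fun u : ℕ => (h u)ᴴ * h (u + j))
      ((h 0)ᴴ * h j + Bᴴ * Γ * (A ^ j * B)) := by
    have := HasSum.zero_add (f := fun u : ℕ => (h u)ᴴ * h (u + j))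
      (by simpa only [← hsucc] using hasSum_conjTranspose_mul_mul hΓ B (A ^ j * B))
    simpa only [Nat.cast_zero, zero_add] using this
  have hnegsum : HasSum (fun u : ℕ => (h (-(u + 1)))ᴴ * h (-(u + 1) + j)) 0 := by
    convert hasSum_zero with u
    rw [hneg _ (by omega), conjTranspose_zero, Matrix.zero_mul]
  rw [← add_zero ((h 0)ᴴ * h j + _)]
  exact hnat.of_nat_of_neg_add_one hnegsum

end Correlation

/-- Markov parameters: with `M(z) = D + C(zI - A)⁻¹B`, `ρ(A) < 1`, Markov parameters
`h₀ = D`, `h_k = C A^{k-1} B` (`k ≥ 1`), `h_k = 0` (`k < 0`), and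
`c_n = ∑_{j ∈ ℤ} h_j* h_{j+n}`, `Γ = ∑_{u≥0} A*^u C* C A^u`, `Y = D* C + B* Γ A`, one has
`c₀ = D* D + B* Γ B`, `c_n = Y A^{n-1} B` for `n > 0`, `c_n = B* A*^{(-n-1)} Y*` for `n < 0`. -/
theorem markov_parameter_correlation_formulas
    (d p q : ℕ)
    (A : Matrix (Fin d) (Fin d) ℂ) (B : Matrix (Fin d) (Fin q) ℂ)
    (C : Matrix (Fin p) (Fin d) ℂ) (D : Matrix (Fin p) (Fin q) ℂ)
    (hA : spectralRadius ℂ A < 1)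
    (h : ℤ → Matrix (Fin p) (Fin q) ℂ)
    (hh0 : h 0 = D)
    (hhpos : ∀ k : ℕ, h (k + 1) = C * A ^ k * B)
    (hhneg : ∀ k : ℤ, k < 0 → h k = 0)
    (c : ℤ → Matrix (Fin q) (Fin q) ℂ)
    (hc : ∀ n : ℤ, c n = ∑' j : ℤ, (h j)ᴴ * h (j + n))
    (Γ : Matrix (Fin d) (Fin d) ℂ)
    (hΓ : Γ = ∑' u : ℕ, (Aᴴ) ^ u * Cᴴ * C * A ^ u)
    (Y : Matrix (Fin q) (Fin d) ℂ)
    (hY : Y = Dᴴ * C + Bᴴ * Γ * A) :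
    c 0 = Dᴴ * D + Bᴴ * Γ * B ∧
      (∀ n : ℕ, c (n + 1) = Y * A ^ n * B) ∧
      (∀ n : ℕ, c (-(n + 1) : ℤ) = Bᴴ * (Aᴴ) ^ n * Yᴴ) := by
  have hΓsum : HasSum (fun u : ℕ => (Aᴴ) ^ u * Cᴴ * C * A ^ u) Γ := by
    have := summable_star_pow_mul_mul_pow_of_spectralRadius_lt_one hA (Cᴴ * C)
    simp only [star_eq_conjTranspose, conjTranspose_pow, ← Matrix.mul_assoc] at this
    exact hΓ ▸ this.hasSum
  have hc' : c = autocorrelation h := funext hc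
  have hcorr (j : ℕ) : c j = Dᴴ * h j + Bᴴ * Γ * (A ^ j * B) := by
    rw [hc', ← hh0]
    exact (hasSum_autocorrelation_of_markov hhpos hhneg hΓsum j).tsum_eq
  have hcpos (n : ℕ) : c (n + 1) = Y * A ^ n * B := by
    rw [← Nat.cast_succ, hcorr, Nat.cast_succ, hhpos, hY]
    simp only [Matrix.add_mul, Matrix.mul_assoc, pow_succ']
  refine ⟨by simpa [hh0] using hcorr 0, hcpos, fun n => ?_⟩
  rw [hc', autocorrelation_neg, ← hc', hcpos]
  simp only [conjTranspose_mul, conjTranspose_pow, Matrix.mul_assoc]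
end

section
/- Let (c_n)_{n∈ℤ} be complex numbers satisfying |c_k| ≤ C e^{-α|k|} for some C, α > 0, let N ≥ 2 be an integer, and define the Ruelle operator (Rf)_ℓ = (1/N) ∑_{k∈ℤ} c_{Nℓ-k} f_k on sequences. Then for every β > α and β′ < Nα, R maps the weighted space ℰ_β = {f : ∑_n e^{β|n|}|f_n| < ∞} boundedly into ℰ_{β′}. -/
/-!
By the triangle inequality `|Nℓ| ≤ |Nℓ - k| + |k|` and `α ≤ β`, the kernel of the Ruelle operator
satisfies `e^{β'|ℓ|} |c_{Nℓ-k}| ≤ C e^{-(Nα - β')|ℓ|} e^{β|k|}`. A kernel dominated in this way by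
a product `u(ℓ) w(k)` with `u` summable maps the `w`-weighted `ℓ¹` space boundedly into the
correspondingly weighted one, with operator bound `∑ u`; here `u` is summable because `β' < Nα`.
-/

open Real

theorem summable_exp_neg_mul_abs_int {δ : ℝ} (hδ : 0 < δ) :
    Summable fun n : ℤ => exp (-δ * |(n : ℝ)|) := by
  have hnat : Summable fun n : ℕ => exp (-δ * |(n : ℝ)|) := by
    simpa only [Nat.abs_cast, mul_comm] using summable_exp_nat_mul_iff.mpr (neg_lt_zero.mpr hδ)
  exact .of_nat_of_neg (by simpa only [Int.cast_natCast] using hnat)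
    (by simpa only [Int.cast_neg, Int.cast_natCast, abs_neg] using hnat)

section WeightedKernel

variable {ι κ E : Type*} [NormedRing E]
  {a : ι → κ → E} {f : κ → E} {u v : ι → ℝ} {w : κ → ℝ}

theorem summable_norm_mul_of_weighted_norm_le (hv : ∀ i, 0 < v i)
    (ha : ∀ i k, v i * ‖a i k‖ ≤ u i * w k) (hf : Summable fun k => w k * ‖f k‖) (i : ι) :
    Summable fun k => ‖a i k * f k‖ := by
  refine (hf.mul_left (u i / v i)).of_nonneg_of_le (fun k => norm_nonneg _) fun k => ?_
  have hak : ‖a i k‖ ≤ u i / v i * w k := by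
    rw [div_mul_eq_mul_div, le_div_iff₀' (hv i)]
    exact ha i k
  calc ‖a i k * f k‖ ≤ ‖a i k‖ * ‖f k‖ := norm_mul_le _ _
    _ ≤ u i / v i * w k * ‖f k‖ := by gcongr
    _ = u i / v i * (w k * ‖f k‖) := mul_assoc _ _ _

theorem weighted_norm_tsum_mul_le (hv : ∀ i, 0 < v i)
    (ha : ∀ i k, v i * ‖a i k‖ ≤ u i * w k) (hf : Summable fun k => w k * ‖f k‖) (i : ι) :
    v i * ‖∑' k, a i k * f k‖ ≤ u i * ∑' k, w k * ‖f k‖ := by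
  have hnorm : Summable fun k => ‖a i k * f k‖ :=
    summable_norm_mul_of_weighted_norm_le hv ha hf i
  calc v i * ‖∑' k, a i k * f k‖ ≤ v i * ∑' k, ‖a i k * f k‖ :=
        mul_le_mul_of_nonneg_left (norm_tsum_le_tsum_norm hnorm) (hv i).le
    _ = ∑' k, v i * ‖a i k * f k‖ := by rw [tsum_mul_left]
    _ ≤ ∑' k, u i * (w k * ‖f k‖) := by
        refine (hnorm.mul_left _).tsum_le_tsum (fun k => ?_) (hf.mul_left _)
        calc v i * ‖a i k * f k‖ ≤ v i * ‖a i k‖ * ‖f k‖ := by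
              rw [mul_assoc]; exact mul_le_mul_of_nonneg_left (norm_mul_le _ _) (hv i).le
          _ ≤ u i * w k * ‖f k‖ := mul_le_mul_of_nonneg_right (ha i k) (norm_nonneg _)
          _ = u i * (w k * ‖f k‖) := mul_assoc _ _ _
    _ = u i * ∑' k, w k * ‖f k‖ := tsum_mul_left

theorem summable_weighted_norm_tsum_mul (hv : ∀ i, 0 < v i)
    (ha : ∀ i k, v i * ‖a i k‖ ≤ u i * w k) (hu : Summable u)
    (hf : Summable fun k => w k * ‖f k‖) :
    Summable fun i => v i * ‖∑' k, a i k * f k‖ :=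
  (hu.mul_right _).of_nonneg_of_le (fun i => mul_nonneg (hv i).le (norm_nonneg _))
    (weighted_norm_tsum_mul_le hv ha hf)

theorem tsum_weighted_norm_tsum_mul_le (hv : ∀ i, 0 < v i)
    (ha : ∀ i k, v i * ‖a i k‖ ≤ u i * w k) (hu : Summable u)
    (hf : Summable fun k => w k * ‖f k‖) :
    ∑' i, v i * ‖∑' k, a i k * f k‖ ≤ (∑' i, u i) * ∑' k, w k * ‖f k‖ := by
  rw [← tsum_mul_right]
  exact (summable_weighted_norm_tsum_mul hv ha hu hf).tsum_le_tsum
    (weighted_norm_tsum_mul_le hv ha hf) (hu.mul_right _)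

end WeightedKernel

theorem mul_mul_abs_le_mul_abs_sub_add {α β n : ℝ} (hα : 0 ≤ α) (hαβ : α ≤ β) (hn : 0 ≤ n)
    (x y : ℝ) : α * (n * |x|) ≤ α * |n * x - y| + β * |y| := by
  have htri : n * |x| ≤ |n * x - y| + |y| := by
    have := abs_sub_abs_le_abs_sub (n * x) y
    rwa [abs_mul, abs_of_nonneg hn, sub_le_iff_le_add] at this
  calc α * (n * |x|) ≤ α * (|n * x - y| + |y|) := mul_le_mul_of_nonneg_left htri hα
    _ ≤ α * |n * x - y| + β * |y| := by rw [mul_add]; gcongr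

theorem exp_mul_norm_le_of_exp_decay {c : ℤ → ℂ} {C α : ℝ} (hC : 0 ≤ C) (hα : 0 ≤ α)
    (hc : ∀ k : ℤ, ‖c k‖ ≤ C * exp (-α * |(k : ℝ)|)) {β : ℝ} (hαβ : α ≤ β) (β' : ℝ) (N : ℕ)
    (ℓ k : ℤ) :
    exp (β' * |(ℓ : ℝ)|) * ‖c (N * ℓ - k)‖ ≤
      C * exp (-(N * α - β') * |(ℓ : ℝ)|) * exp (β * |(k : ℝ)|) := by
  have hexp : β' * |(ℓ : ℝ)| + -α * |((N * ℓ - k : ℤ) : ℝ)| ≤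
      -(N * α - β') * |(ℓ : ℝ)| + β * |(k : ℝ)| := by
    have := mul_mul_abs_le_mul_abs_sub_add hα hαβ (Nat.cast_nonneg N) (ℓ : ℝ) k
    push_cast
    linarith
  calc exp (β' * |(ℓ : ℝ)|) * ‖c (N * ℓ - k)‖
      ≤ exp (β' * |(ℓ : ℝ)|) * (C * exp (-α * |((N * ℓ - k : ℤ) : ℝ)|)) := by gcongr; exact hc _
    _ = C * exp (β' * |(ℓ : ℝ)| + -α * |((N * ℓ - k : ℤ) : ℝ)|) := by rw [exp_add]; ring
    _ ≤ C * exp (-(N * α - β') * |(ℓ : ℝ)| + β * |(k : ℝ)|) := by gcongr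
    _ = C * exp (-(N * α - β') * |(ℓ : ℝ)|) * exp (β * |(k : ℝ)|) := by rw [exp_add]; ring

theorem ruelle_operator_bounded_weighted_spaces_general
    (c : ℤ → ℂ) (C0 α : ℝ) (hC0 : 0 < C0) (hα : 0 < α)
    (hc : ∀ k : ℤ, ‖c k‖ ≤ C0 * Real.exp (-α * |(k : ℝ)|))
    (N : ℕ)
    (β β' : ℝ) (hβ : α < β) (hβ' : β' < N * α) :
    ∃ K : ℝ, ∀ f : ℤ → ℂ,
      Summable (fun n : ℤ => Real.exp (β * |(n : ℝ)|) * ‖f n‖) →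
        (∀ ℓ : ℤ, Summable fun k : ℤ => c ((N : ℤ) * ℓ - k) * f k) ∧
        Summable (fun ℓ : ℤ =>
          Real.exp (β' * |(ℓ : ℝ)|) *
            ‖((N : ℂ)⁻¹ * ∑' k : ℤ, c ((N : ℤ) * ℓ - k) * f k)‖) ∧
        (∑' ℓ : ℤ,
            Real.exp (β' * |(ℓ : ℝ)|) *
              ‖((N : ℂ)⁻¹ * ∑' k : ℤ, c ((N : ℤ) * ℓ - k) * f k)‖) ≤
          K * ∑' n : ℤ, Real.exp (β * |(n : ℝ)|) * ‖f n‖ := by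
  set u : ℤ → ℝ := fun ℓ => C0 * exp (-(N * α - β') * |(ℓ : ℝ)|)
  have hu : Summable u := (summable_exp_neg_mul_abs_int (sub_pos.mpr hβ')).mul_left C0
  have hv : ∀ ℓ : ℤ, 0 < exp (β' * |(ℓ : ℝ)|) := fun ℓ => exp_pos _
  have ha := exp_mul_norm_le_of_exp_decay hC0.le hα.le hc hβ.le β' N
  refine ⟨‖(N : ℂ)⁻¹‖ * ∑' ℓ, u ℓ, fun f hf =>
    ⟨fun ℓ => (summable_norm_mul_of_weighted_norm_le hv ha hf ℓ).of_norm, ?_, ?_⟩⟩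
  · simpa only [norm_mul, mul_left_comm _ ‖(N : ℂ)⁻¹‖] using
      (summable_weighted_norm_tsum_mul hv ha hu hf).mul_left ‖(N : ℂ)⁻¹‖
  · simp only [norm_mul, mul_left_comm _ ‖(N : ℂ)⁻¹‖, tsum_mul_left, mul_assoc]
    gcongr
    exact tsum_weighted_norm_tsum_mul_le hv ha hu hf

/-- Let `(c_n)` satisfy `|c_k| ≤ C e^{-α|k|}`, `N ≥ 2`, and define the Ruelle operator
`(Rf)_ℓ = (1/N) ∑_k c_{Nℓ-k} f_k`. Then for every `β > α` and `β' < Nα`, `R` maps the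
weighted space `ℰ_β = {f : ∑ e^{β|n|} |f_n| < ∞}` boundedly into `ℰ_{β'}`. -/
theorem ruelle_operator_bounded_weighted_spaces
    (c : ℤ → ℂ) (C0 α : ℝ) (hC0 : 0 < C0) (hα : 0 < α)
    (hc : ∀ k : ℤ, ‖c k‖ ≤ C0 * Real.exp (-α * |(k : ℝ)|))
    (N : ℕ) (hN : 2 ≤ N)
    (β β' : ℝ) (hβ : α < β) (hβ' : β' < N * α) :
    ∃ K : ℝ, ∀ f : ℤ → ℂ,
      Summable (fun n : ℤ => Real.exp (β * |(n : ℝ)|) * ‖f n‖) →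
        (∀ ℓ : ℤ, Summable fun k : ℤ => c ((N : ℤ) * ℓ - k) * f k) ∧
        Summable (fun ℓ : ℤ =>
          Real.exp (β' * |(ℓ : ℝ)|) *
            ‖((N : ℂ)⁻¹ * ∑' k : ℤ, c ((N : ℤ) * ℓ - k) * f k)‖) ∧
        (∑' ℓ : ℤ,
            Real.exp (β' * |(ℓ : ℝ)|) *
              ‖((N : ℂ)⁻¹ * ∑' k : ℤ, c ((N : ℤ) * ℓ - k) * f k)‖) ≤
          K * ∑' n : ℤ, Real.exp (β * |(n : ℝ)|) * ‖f n‖ :=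
  ruelle_operator_bounded_weighted_spaces_general c C0 α hC0 hα hc N β β' hβ hβ'
end

section
/- Let m(z) = ∑_{j=1}^N z^{1-j} [W(z^N)]_{1j}, where W is an N×N matrix-valued function taking unitary values on the unit circle 𝕋. Then for every z ∈ 𝕋, (1/N) ∑_{ω∈𝕋, ω^N = z} |m(ω)|² = 1. -/
/-!
For `‖ω‖ = 1` we have `conj ω = ω⁻¹`, so with `w` the first row of `W z`,
`|m ω|² = ∑_{j,k} ω^(k-j) w_j conj w_k` at every `N`-th root `ω` of `z`. Averaging over these
roots kills the off-diagonal terms, since multiplication by a primitive `N`-th root of unity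
permutes them and `N ∤ k - j` for `j ≠ k`. What remains is `∑_j |w_j|² = 1`, as the rows of a
unitary matrix are unit vectors.
-/

open Polynomial Matrix ComplexConjugate

theorem sum_nthRoots_zpow_eq_zero {K : Type*} [Field K] [DecidableEq K] {N : ℕ} {ζ : K}
    (hζ : IsPrimitiveRoot ζ N) (z : K) {d : ℤ} (hd : ¬(N : ℤ) ∣ d) :
    ∑ ω ∈ (nthRoots N z).toFinset, ω ^ d = 0 := by
  rcases N.eq_zero_or_pos with rfl | hN
  · simp [nthRoots_zero]
  have hζ0 : ζ ≠ 0 := hζ.ne_zero hN.ne'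
  have hmem : ∀ ω, ω ∈ (nthRoots N z).toFinset ↔ ω ^ N = z := by
    simp [mem_nthRoots hN]
  have hshift : ∑ ω ∈ (nthRoots N z).toFinset, (ζ * ω) ^ d
      = ∑ ω ∈ (nthRoots N z).toFinset, ω ^ d :=
    Finset.sum_nbij' (ζ * ·) (ζ⁻¹ * ·)
      (by simp [hmem, mul_pow, hζ.pow_eq_one]) (by simp [hmem, mul_pow, inv_pow, hζ.pow_eq_one])
      (by simp [hζ0]) (by simp [hζ0]) (fun _ _ => rfl)
  by_contra hS
  simp_rw [mul_zpow, ← Finset.mul_sum] at hshift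
  exact hd ((hζ.zpow_eq_one_iff_dvd d).mp ((mul_eq_right₀ hS).mp hshift))

theorem Complex.sum_nthRoots_zpow_sub {N : ℕ} (hN : 0 < N) {z : ℂ} (hz : z ≠ 0) (j k : Fin N) :
    ∑ ω ∈ (nthRoots N z).toFinset, ω ^ ((k : ℤ) - j) = if j = k then (N : ℂ) else 0 := by
  have hζ := Complex.isPrimitiveRoot_exp N hN.ne'
  split_ifs with hjk
  · obtain ⟨α, hα⟩ := IsAlgClosed.exists_pow_nat_eq z hN
    simp only [hjk, sub_self, _root_.zpow_zero, Finset.sum_const, nsmul_eq_mul, mul_one]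
    rw [Multiset.toFinset_card_of_nodup (hζ.nthRoots_nodup hz), hζ.card_nthRoots, if_pos ⟨α, hα⟩]
  · refine sum_nthRoots_zpow_eq_zero hζ z fun hdvd => hjk ?_
    have := Int.eq_zero_of_abs_lt_dvd hdvd (abs_lt.mpr ⟨by omega, by omega⟩)
    omega

theorem Complex.norm_eq_one_of_mem_nthRoots {N : ℕ} (hN : 0 < N) {z ω : ℂ} (hz : ‖z‖ = 1)
    (hω : ω ∈ nthRoots N z) : ‖ω‖ = 1 := by
  rw [mem_nthRoots hN] at hω
  rw [← pow_eq_one_iff_of_nonneg (norm_nonneg ω) hN.ne', ← norm_pow, hω, hz]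

theorem Complex.sum_nthRoots_norm_sq_sum_zpow_mul {N : ℕ} (hN : 0 < N) {z : ℂ} (hz : ‖z‖ = 1)
    (v : Fin N → ℂ) :
    ∑ ω ∈ (nthRoots N z).toFinset, ‖∑ j : Fin N, ω ^ (-(j : ℤ)) * v j‖ ^ 2
      = N * ∑ j, ‖v j‖ ^ 2 := by
  have hz0 : z ≠ 0 := by rintro rfl; simp at hz
  have hexpand : ∀ ω ∈ (nthRoots N z).toFinset,
      ((‖∑ j : Fin N, ω ^ (-(j : ℤ)) * v j‖ ^ 2 : ℝ) : ℂ)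
        = ∑ j : Fin N, ∑ k : Fin N, ω ^ ((k : ℤ) - j) * (v j * conj (v k)) := fun ω hω => by
    have hω := norm_eq_one_of_mem_nthRoots hN hz (Multiset.mem_toFinset.mp hω)
    have hω0 : ω ≠ 0 := by rintro rfl; simp at hω
    rw [Complex.ofReal_pow, ← Complex.mul_conj', map_sum, Finset.sum_mul_sum]
    refine Finset.sum_congr rfl fun j _ => Finset.sum_congr rfl fun k _ => ?_
    rw [map_mul, map_zpow₀, ← Complex.inv_eq_conj hω, _root_.inv_zpow', neg_neg, zpow_sub₀ hω0,
      _root_.zpow_neg]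
    ring
  apply Complex.ofReal_injective
  rw [Complex.ofReal_sum, Finset.sum_congr rfl hexpand, Finset.sum_comm]
  conv_lhs => enter [2, j]; rw [Finset.sum_comm]
  simp_rw [← Finset.sum_mul, Complex.sum_nthRoots_zpow_sub hN hz0, ite_mul, zero_mul,
    Finset.sum_ite_eq, Finset.mem_univ, if_true, Complex.mul_conj']
  push_cast
  rw [Finset.mul_sum]

theorem Matrix.sum_norm_sq_row_eq_one_of_conjTranspose_mul_self {n : Type*} [Fintype n]
    [DecidableEq n] {A : Matrix n n ℂ} (hA : Aᴴ * A = 1) (i : n) : ∑ j, ‖A i j‖ ^ 2 = 1 := by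
  have : (A * Aᴴ) i i = (1 : Matrix n n ℂ) i i := by rw [mul_eq_one_comm.mp hA]
  simp only [mul_apply, conjTranspose_apply, one_apply_eq, RCLike.star_def,
    Complex.mul_conj'] at this
  exact_mod_cast this

/-- Let `m(z) = ∑_{j=1}^N z^{1-j} [W(z^N)]_{1j}` where `W` is an `N×N` matrix function
taking unitary values on the unit circle. Then for every `z` on the unit circle,
`(1/N) ∑_{ω^N = z} |m(ω)|² = 1`. -/
theorem ruelle_fixed_point_one
    (N : ℕ) (hN : 2 ≤ N)
    (W : ℂ → Matrix (Fin N) (Fin N) ℂ)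
    (hW : ∀ z : ℂ, ‖z‖ = 1 → (W z)ᴴ * W z = 1)
    (m : ℂ → ℂ)
    (hm : ∀ ω : ℂ, m ω = ∑ j : Fin N, ω ^ (-(j : ℤ)) * W (ω ^ N) ⟨0, by omega⟩ j) :
    ∀ z : ℂ, ‖z‖ = 1 →
      (1 / (N : ℝ)) * ∑ ω ∈ (nthRoots N z).toFinset, ‖m ω‖ ^ 2 = 1 := by
  intro z hz
  have hN0 : 0 < N := by omega
  have hm_root : ∀ ω ∈ (nthRoots N z).toFinset,
      m ω = ∑ j : Fin N, ω ^ (-(j : ℤ)) * W z ⟨0, hN0⟩ j := fun ω hω => by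
    rw [hm, (mem_nthRoots hN0).mp (Multiset.mem_toFinset.mp hω)]
  rw [Finset.sum_congr rfl fun ω hω => by rw [hm_root ω hω],
    Complex.sum_nthRoots_norm_sq_sum_zpow_mul hN0 hz,
    Matrix.sum_norm_sq_row_eq_one_of_conjTranspose_mul_self (hW z hz)]
  field_simp
end
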